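/- Let G be a finite simple graph with vertex set [n] = {1,...,n}. Then the natural ordering 1,2,...,n is a perfect elimination ordering of G if and only if for every positive integer t, the number of proper colorings of G with colors in {1,...,t} equals ∑_{m≥0} (−1)^m · isf_m(G) · t^{n−m}. -/

import Mathlib

open Polynomial Classical

/-- A simple graph on a linearly ordered vertex type is an *increasing forest*. -/
def IsIncreasingForest {V : Type*} [LinearOrder V] (F : SimpleGraph V) : Prop :=
  F.IsAcyclic ∧ ∀ (r v : V), (∀ w, F.Reachable r w → r ≤ w) →
    ∀ p : F.Walk r v, p.IsPath → p.support.Chain' (· < ·)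

/-- `F` is an increasing spanning forest of `G`. -/
def IsISF {n : ℕ} (G : SimpleGraph (Fin n)) (F : Finset (Sym2 (Fin n))) : Prop :=
  (F : Set (Sym2 (Fin n))) ⊆ G.edgeSet ∧
    IsIncreasingForest (SimpleGraph.fromEdgeSet (F : Set (Sym2 (Fin n))))

/-- The number of increasing spanning forests of `G` with `m` edges. -/
noncomputable def isf {n : ℕ} (G : SimpleGraph (Fin n)) (m : ℕ) : ℕ :=
  ((Finset.univ : Finset (Finset (Sym2 (Fin n)))).filter
    (fun F => IsISF G F ∧ F.card = m)).card

/-- The natural ordering `1, 2, …, n` is a perfect elimination ordering of `G`. -/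
def IsPEO {n : ℕ} (G : SimpleGraph (Fin n)) : Prop :=
  ∀ i j k : Fin n, i < j → j < k → G.Adj i k → G.Adj j k → G.Adj i j

/-! An edge set `F` is an increasing spanning forest exactly when every vertex has at most one
smaller `F`-neighbour: two smaller neighbours `u, u'` of `v` would give two paths from the root
to `v` (through `u` and through `u'`, both increasing up to them), while a cycle has two smaller
neighbours at its largest vertex. So increasing spanning forests are encoded by choosing for each
vertex `v` either nothing (weight `t`) or a parent among its `d v` lower neighbours (weight `-1`),
and the alternating sum factors as `∏ v, (t - d v)`.

Colouring the vertices in increasing order, the last vertex `v` has `t - |c(N⁻ v)|` free colours,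
which is at least `t - d v` and equals it for every colouring of the rest iff `N⁻ v` is a clique.
With `t ≥ n` colours a non-adjacent pair in `N⁻ v` can share a colour, so the chromatic count
equals the product for all `t` iff every lower neighbourhood is a clique, i.e. iff the natural
ordering is a perfect elimination ordering. -/

section IncreasingForest

open SimpleGraph Walk

variable {V : Type*} [LinearOrder V] {F : SimpleGraph V}

def HasAtMostOneLowerNeighbor (F : SimpleGraph V) : Prop :=
  ∀ ⦃u u' v : V⦄, F.Adj u v → F.Adj u' v → u < v → u' < v → u = u'

lemma HasAtMostOneLowerNeighbor.isChain_support (hF : HasAtMostOneLowerNeighbor F) {a b : V}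
    (p : F.Walk a b) (hp : p.IsPath) (ha : ∀ u ∈ p.support, F.Adj u a → a < u) :
    p.support.IsChain (· < ·) := by
  induction p with
  | nil => simp
  | @cons a x b h q ih =>
    have hax : a < x := ha x (by simp) h.symm
    rw [cons_isPath_iff] at hp
    refine List.isChain_cons.mpr ⟨fun y hy => ?_, ih hp.1 fun u hu hux => ?_⟩
    · rw [← cons_tail_support, List.head?_cons, Option.mem_def, Option.some.injEq] at hy
      exact hy ▸ hax
    · by_contra hxu
      have hua : u = a := hF hux h (lt_of_le_of_ne (not_lt.mp hxu) hux.ne) hax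
      exact hp.2 (hua ▸ hu)

lemma HasAtMostOneLowerNeighbor.isAcyclic (hF : HasAtMostOneLowerNeighbor F) : F.IsAcyclic := by
  intro v c hc
  obtain ⟨m, hm, hmax⟩ := c.support.toFinset.exists_max_image id ⟨v, by simp⟩
  rw [List.mem_toFinset] at hm
  set c' := c.rotate m hm
  have lower (i : ℕ) (h : F.Adj (c'.getVert i) m) : c'.getVert i < m :=
    lt_of_le_of_ne (hmax _ (List.mem_toFinset.mpr
      ((mem_support_rotate_iff ..).mp (c'.getVert_mem_support i)))) h.ne
  have hc' : c'.IsCycle := hc.rotate hm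
  have h₁ := (c'.adj_snd hc'.not_nil).symm
  have h₂ := c'.adj_penultimate hc'.not_nil
  exact hc'.snd_ne_penultimate <| hF h₁ h₂ (lower _ h₁) (lower _ h₂)

lemma le_of_mem_support_of_isChain {a b : V} (p : F.Walk a b) (hp : p.support.IsChain (· < ·))
    {x : V} (hx : x ∈ p.support) : x ≤ b := by
  induction p generalizing x with
  | nil => exact (List.mem_singleton.mp hx).le
  | @cons a y b h q ih =>
    rw [support_cons, ← q.cons_tail_support, List.isChain_cons_cons, q.cons_tail_support] at hp
    rcases List.mem_cons.mp hx with rfl | hx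
    · exact hp.1.le.trans (ih hp.2 q.start_mem_support)
    · exact ih hp.2 hx

theorem isIncreasingForest_iff [WellFoundedLT V] :
    IsIncreasingForest F ↔ HasAtMostOneLowerNeighbor F := by
  refine ⟨fun ⟨hac, hinc⟩ u u' v hu hu' huv hu'v => ?_, fun hF => ⟨hF.isAcyclic,
    fun r v hr p hp =>
      hF.isChain_support p hp fun u _ hu => (hr u hu.symm.reachable).lt_of_ne hu.ne'⟩⟩
  obtain ⟨r, hvr : F.Reachable v r, hmin⟩ :=
    wellFounded_lt.has_min {w | F.Reachable v w} ⟨v, Reachable.refl v⟩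
  have hr (w : V) (hw : F.Reachable r w) : r ≤ w := not_lt.mp (hmin w (hvr.trans hw))
  have avoid (x : V) (hx : F.Adj x v) (hxv : x < v) : ∃ p : F.Path r x, v ∉ p.1.support := by
    obtain ⟨p⟩ := hvr.symm.trans hx.symm.reachable
    exact ⟨p.toPath, fun hv => not_le.mpr hxv
      (le_of_mem_support_of_isChain _ (hinc r x hr _ p.toPath.2) hv)⟩
  obtain ⟨p, hp⟩ := avoid u hu huv
  obtain ⟨p', hp'⟩ := avoid u' hu' hu'v
  have := (hac.subsingleton_path r v).elim ⟨p.1.concat hu, p.2.concat hp hu⟩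
    ⟨p'.1.concat hu', p'.2.concat hp' hu'⟩
  exact (concat_inj (congrArg Subtype.val this)).1

end IncreasingForest

lemma finset_sym2_ext_of_lt {V : Type*} [LinearOrder V] {E E' : Finset (Sym2 V)}
    (hE : ∀ e ∈ E, ¬e.IsDiag) (hE' : ∀ e ∈ E', ¬e.IsDiag)
    (h : ∀ ⦃u v⦄, u < v → (s(u, v) ∈ E ↔ s(u, v) ∈ E')) : E = E' := by
  ext e
  induction e using Sym2.ind with | _ a b => ?_
  rcases lt_trichotomy a b with hab | rfl | hab
  · exact h hab
  · exact iff_of_false (fun he => hE _ he rfl) (fun he => hE' _ he rfl)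
  · rw [Sym2.eq_swap]; exact h hab

section ParentChoice

open SimpleGraph Finset

variable {n : ℕ} {G : SimpleGraph (Fin n)}

noncomputable def lowerNeighbors (G : SimpleGraph (Fin n)) (v : Fin n) : Finset (Fin n) :=
  {u | u < v ∧ G.Adj u v}

lemma mem_lowerNeighbors {u v : Fin n} : u ∈ lowerNeighbors G v ↔ u < v ∧ G.Adj u v := by
  simp [lowerNeighbors]

abbrev ParentChoice (G : SimpleGraph (Fin n)) : Type := ∀ v, Option (lowerNeighbors G v)

def parentEdges (p : ParentChoice G) : Finset (Sym2 (Fin n)) :=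
  univ.biUnion fun v => ((p v).map fun u => s(↑u, v)).toFinset

lemma mem_parentEdges {p : ParentChoice G} {e : Sym2 (Fin n)} :
    e ∈ parentEdges p ↔ ∃ v u, p v = some u ∧ s(↑u, v) = e := by
  simp only [parentEdges, mem_biUnion, mem_univ, true_and, Option.mem_toFinset, Option.mem_def,
    Option.map_eq_some_iff]

lemma mem_parentEdges_iff_of_lt {p : ParentChoice G} {u v : Fin n} (huv : u < v) :
    s(u, v) ∈ parentEdges p ↔ (p v).map (↑) = some u := by
  rw [mem_parentEdges]
  constructor
  · rintro ⟨w, ⟨x, hx⟩, hpw, hxw⟩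
    have hxw' := (mem_lowerNeighbors.mp hx).1
    rcases Sym2.eq_iff.mp hxw with ⟨rfl, rfl⟩ | ⟨rfl, rfl⟩
    · simp [hpw]
    · exact absurd (hxw'.trans huv) (lt_irrefl _)
  · intro h
    obtain ⟨x, hx, rfl⟩ := Option.map_eq_some_iff.mp h
    exact ⟨v, x, hx, rfl⟩

lemma parentEdges_subset_edgeSet (p : ParentChoice G) :
    (parentEdges p : Set (Sym2 (Fin n))) ⊆ G.edgeSet := by
  intro e he
  obtain ⟨v, u, -, rfl⟩ := mem_parentEdges.mp he
  exact (mem_lowerNeighbors.mp u.2).2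

lemma parentEdges_injective : Function.Injective (parentEdges (G := G)) := by
  intro p p' h
  funext v
  refine Option.map_injective Subtype.val_injective (Option.ext fun u => ?_)
  by_cases huv : u < v
  · rw [← mem_parentEdges_iff_of_lt huv, ← mem_parentEdges_iff_of_lt huv, h]
  · have hne (q : ParentChoice G) : (q v).map (↑) ≠ some u := fun hu => by
      obtain ⟨x, -, rfl⟩ := Option.map_eq_some_iff.mp hu
      exact huv (mem_lowerNeighbors.mp x.2).1
    exact iff_of_false (hne p) (hne p')

lemma card_parentEdges (p : ParentChoice G) : #(parentEdges p) = #{v | (p v).isSome} := by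
  rw [parentEdges, card_biUnion, card_filter]
  · refine sum_congr rfl fun v _ => ?_
    cases p v <;> simp
  · intro v _ w _ hvw
    simp only [Function.onFun, Finset.disjoint_left, Option.mem_toFinset, Option.mem_def,
      Option.map_eq_some_iff]
    rintro e ⟨x, -, rfl⟩ ⟨y, -, hy⟩
    have hx := (mem_lowerNeighbors.mp x.2).1
    have hy' := (mem_lowerNeighbors.mp y.2).1
    rcases Sym2.eq_iff.mp hy with ⟨-, rfl⟩ | ⟨hyv, hwx⟩
    · exact hvw rfl
    · exact lt_asymm hx (hyv.symm.trans_lt (hy'.trans_eq hwx))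

lemma isISF_parentEdges (p : ParentChoice G) : IsISF G (parentEdges p) := by
  refine ⟨parentEdges_subset_edgeSet p,
    isIncreasingForest_iff.mpr fun u u' v hu hu' huv hu'v => ?_⟩
  rw [fromEdgeSet_adj, mem_coe, mem_parentEdges_iff_of_lt huv] at hu
  rw [fromEdgeSet_adj, mem_coe, mem_parentEdges_iff_of_lt hu'v] at hu'
  exact Option.some_injective _ (hu.1.symm.trans hu'.1)

lemma exists_parentEdges_eq {F : Finset (Sym2 (Fin n))} (hF : IsISF G F) :
    ∃ p : ParentChoice G, parentEdges p = F := by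
  obtain ⟨hFG, hF⟩ := hF
  rw [isIncreasingForest_iff] at hF
  let p : ParentChoice G := fun v => if h : ∃ u, u < v ∧ s(u, v) ∈ F then
    some ⟨h.choose, mem_lowerNeighbors.mpr ⟨h.choose_spec.1, hFG h.choose_spec.2⟩⟩ else none
  refine ⟨p, finset_sym2_ext_of_lt
    (fun e he => G.not_isDiag_of_mem_edgeSet (parentEdges_subset_edgeSet p he))
    (fun e he => G.not_isDiag_of_mem_edgeSet (hFG he)) fun u v huv => ?_⟩
  rw [mem_parentEdges_iff_of_lt huv]
  simp only [p]
  split_ifs with h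
  · simp only [Option.map_some, Option.some.injEq]
    refine ⟨fun hu => hu ▸ h.choose_spec.2, fun hu => hF ?_ ?_ h.choose_spec.1 huv⟩
    · exact ⟨h.choose_spec.2, h.choose_spec.1.ne⟩
    · exact ⟨hu, huv.ne⟩
  · simpa using fun hu => h ⟨u, huv, hu⟩

lemma prod_ite_isSome (t : ℤ) (p : ParentChoice G) :
    ∏ v, (if (p v).isSome then -1 else t) =
      (-1) ^ #(parentEdges p) * t ^ (n - #(parentEdges p)) := by
  have hcard := card_filter_add_card_filter_not (s := univ) (fun v => (p v).isSome)
  rw [card_univ, Fintype.card_fin] at hcard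
  rw [prod_ite, prod_const, prod_const, card_parentEdges, Nat.sub_eq_of_eq_add' hcard.symm]

lemma sum_option_ite_isSome (t : ℤ) (v : Fin n) :
    ∑ o : Option (lowerNeighbors G v), (if o.isSome then -1 else t) =
      t - #(lowerNeighbors G v) := by
  simp [Fintype.sum_option, sub_eq_add_neg]

theorem sum_isf_eq_prod (t : ℤ) :
    ∑ m ∈ range (n + 1), (-1) ^ m * (isf G m : ℤ) * t ^ (n - m) =
      ∏ v, (t - #(lowerNeighbors G v)) := by
  have hISF :
      ({F | IsISF G F} : Finset _) = (univ : Finset (ParentChoice G)).image parentEdges := by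
    ext F
    simp only [mem_filter, mem_univ, true_and, mem_image]
    exact ⟨exists_parentEdges_eq, fun ⟨p, hp⟩ => hp ▸ isISF_parentEdges p⟩
  have hcard (F) (hF : F ∈ ({F | IsISF G F} : Finset _)) : #F ∈ range (n + 1) := by
    rw [hISF] at hF
    obtain ⟨p, -, rfl⟩ := mem_image.mp hF
    rw [mem_range, Nat.lt_succ_iff, card_parentEdges]
    exact (card_filter_le _ _).trans (card_fin n).le
  calc ∑ m ∈ range (n + 1), (-1) ^ m * (isf G m : ℤ) * t ^ (n - m)
      = ∑ F ∈ ({F | IsISF G F} : Finset _), (-1) ^ #F * t ^ (n - #F) := by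
        rw [← sum_fiberwise_of_maps_to hcard]
        refine sum_congr rfl fun m _ => ?_
        rw [sum_congr rfl fun F hF => by rw [(mem_filter.mp hF).2], sum_const, filter_filter,
          nsmul_eq_mul, isf]
        ring
    _ = ∑ p : ParentChoice G, ∏ v, (if (p v).isSome then -1 else t) := by
        rw [hISF, sum_image fun p _ p' _ h => parentEdges_injective h]
        exact sum_congr rfl fun p _ => (prod_ite_isSome t p).symm
    _ = ∏ v, (t - #(lowerNeighbors G v)) := by
        rw [← Fintype.prod_sum fun v (o : Option (lowerNeighbors G v)) =>
          if o.isSome then (-1 : ℤ) else t]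
        exact prod_congr rfl fun v _ => sum_option_ite_isSome t v

end ParentChoice

section Coloring

open SimpleGraph Finset

variable {n t : ℕ}

abbrev ProperColoring (G : SimpleGraph (Fin n)) (t : ℕ) : Type :=
  {c : Fin n → Fin t // ∀ u v, G.Adj u v → c u ≠ c v}

noncomputable def lastNeighbors (G : SimpleGraph (Fin (n + 1))) : Finset (Fin n) :=
  {u | G.Adj u.castSucc (Fin.last n)}

lemma card_lastNeighbors (G : SimpleGraph (Fin (n + 1))) :
    #(lastNeighbors G) = #(lowerNeighbors G (Fin.last n)) := by
  refine card_bij (fun u _ => u.castSucc) (fun u hu => ?_) (fun _ _ _ _ => Fin.castSucc_inj.mp)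
    fun v hv => ?_
  · exact mem_lowerNeighbors.mpr ⟨Fin.castSucc_lt_last u, (mem_filter.mp hu).2⟩
  · obtain ⟨hv, hadj⟩ := mem_lowerNeighbors.mp hv
    obtain ⟨u, rfl⟩ := Fin.exists_castSucc_eq.mpr hv.ne
    exact ⟨u, mem_filter.mpr ⟨mem_univ _, hadj⟩, rfl⟩

lemma card_lowerNeighbors_comap_castSucc (G : SimpleGraph (Fin (n + 1))) (v : Fin n) :
    #(lowerNeighbors (G.comap Fin.castSucc) v) = #(lowerNeighbors G v.castSucc) := by
  refine card_bij (fun u _ => u.castSucc) (fun u hu => ?_) (fun _ _ _ _ => Fin.castSucc_inj.mp)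
    fun w hw => ?_
  · obtain ⟨hu, hadj⟩ := mem_lowerNeighbors.mp hu
    exact mem_lowerNeighbors.mpr ⟨Fin.castSucc_lt_castSucc_iff.mpr hu, hadj⟩
  · obtain ⟨hw, hadj⟩ := mem_lowerNeighbors.mp hw
    obtain ⟨u, rfl⟩ := Fin.exists_castSucc_eq.mpr (hw.trans (Fin.castSucc_lt_last v)).ne
    exact ⟨u, mem_lowerNeighbors.mpr ⟨Fin.castSucc_lt_castSucc_iff.mp hw, hadj⟩, rfl⟩

lemma prod_sub_card_lowerNeighbors_succ (G : SimpleGraph (Fin (n + 1))) (t : ℤ) :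
    ∏ v, (t - #(lowerNeighbors G v)) =
      (∏ v, (t - #(lowerNeighbors (G.comap Fin.castSucc) v))) *
        (t - #(lowerNeighbors G (Fin.last n))) := by
  simp only [Fin.prod_univ_castSucc, card_lowerNeighbors_comap_castSucc]

lemma isPEO_succ_iff (G : SimpleGraph (Fin (n + 1))) :
    IsPEO G ↔
      IsPEO (G.comap Fin.castSucc) ∧
        (G.comap Fin.castSucc).IsClique (lastNeighbors G : Set (Fin n)) := by
  constructor
  · intro hG
    refine ⟨fun i j k hij hjk hik hjk' => hG _ _ _ hij hjk hik hjk', fun i hi j hj hij => ?_⟩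
    replace hi := (mem_filter.mp hi).2
    replace hj := (mem_filter.mp hj).2
    rcases hij.lt_or_gt with hij | hij
    · exact hG _ _ _ hij (Fin.castSucc_lt_last j) hi hj
    · exact (hG _ _ _ hij (Fin.castSucc_lt_last i) hj hi).symm
  · rintro ⟨hG, hlast⟩ i j k hij hjk hik hjk'
    obtain ⟨j, rfl⟩ := Fin.exists_castSucc_eq.mpr (hjk.trans_le (Fin.le_last k)).ne
    obtain ⟨i, rfl⟩ := Fin.exists_castSucc_eq.mpr (hij.trans (Fin.castSucc_lt_last j)).ne
    induction k using Fin.lastCases with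
    | last =>
      exact hlast (mem_filter.mpr ⟨mem_univ _, hik⟩) (mem_filter.mpr ⟨mem_univ _, hjk'⟩)
        (Fin.castSucc_lt_castSucc_iff.mp hij).ne
    | cast k => exact hG i j k hij hjk hik hjk'

lemma snoc_ne_snoc_of_adj {G : SimpleGraph (Fin (n + 1))}
    (c : ProperColoring (G.comap Fin.castSucc) t) {x : Fin t}
    (hx : x ∉ (lastNeighbors G).image c.1) (u v : Fin (n + 1)) (huv : G.Adj u v) :
    Fin.snoc (α := fun _ => Fin t) c.1 x u ≠ Fin.snoc (α := fun _ => Fin t) c.1 x v := by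
  have hlast (w : Fin n) (hw : G.Adj w.castSucc (Fin.last n)) : c.1 w ≠ x :=
    fun h => hx (mem_image.mpr ⟨w, mem_filter.mpr ⟨mem_univ _, hw⟩, h⟩)
  induction u using Fin.lastCases <;> induction v using Fin.lastCases <;>
    simp only [Fin.snoc_castSucc, Fin.snoc_last]
  · exact absurd huv (G.loopless.irrefl _)
  · exact (hlast _ huv.symm).symm
  · exact hlast _ huv
  · exact c.2 _ _ huv

def properColoringSuccEquiv (G : SimpleGraph (Fin (n + 1))) :
    ProperColoring G t ≃
      Σ c : ProperColoring (G.comap Fin.castSucc) t, {x // x ∉ (lastNeighbors G).image c.1} where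
  toFun c := ⟨⟨Fin.init c.1, fun u v h => c.2 _ _ h⟩, c.1 (Fin.last n), by
    simp only [mem_image, not_exists, not_and]
    exact fun u hu => c.2 _ _ (mem_filter.mp hu).2⟩
  invFun c := ⟨Fin.snoc c.1.1 c.2.1, snoc_ne_snoc_of_adj c.1 c.2.2⟩
  left_inv c := Subtype.ext (Fin.snoc_init_self c.1)
  right_inv c := Sigma.subtype_ext (Subtype.ext (Fin.init_snoc (α := fun _ => Fin t) _ _))
    (Fin.snoc_last (α := fun _ => Fin t) _ _)

lemma card_properColoring_succ (G : SimpleGraph (Fin (n + 1))) :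
    (Nat.card (ProperColoring G t) : ℤ) =
      Nat.card (ProperColoring (G.comap Fin.castSucc) t) *
          ((t : ℤ) - #(lowerNeighbors G (Fin.last n))) +
        ∑ c : ProperColoring (G.comap Fin.castSucc) t,
          ((#(lastNeighbors G) : ℤ) - #((lastNeighbors G).image c.1)) := by
  have hfiber (c : ProperColoring (G.comap Fin.castSucc) t) :
      (Nat.card {x // x ∉ (lastNeighbors G).image c.1} : ℤ) =
        ((t : ℤ) - #(lowerNeighbors G (Fin.last n))) +
          ((#(lastNeighbors G) : ℤ) - #((lastNeighbors G).image c.1)) := by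
    rw [Nat.card_eq_fintype_card, Fintype.card_subtype_compl, Fintype.card_coe, Fintype.card_fin,
      Nat.cast_sub ((card_le_univ _).trans_eq (Fintype.card_fin t)), card_lastNeighbors]
    ring
  rw [Nat.card_congr (properColoringSuccEquiv G), Nat.card_sigma, Nat.cast_sum,
    sum_congr rfl fun c _ => hfiber c, sum_add_distrib, sum_const, card_univ, nsmul_eq_mul,
    Nat.card_eq_fintype_card]

lemma card_properColoring_zero (G : SimpleGraph (Fin 0)) :
    Nat.card (ProperColoring G t) = 1 :=
  Nat.card_eq_one_iff_unique.mpr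
    ⟨⟨fun _ _ => Subtype.ext (funext fun v => v.elim0)⟩, ⟨⟨Fin.elim0, fun u => u.elim0⟩⟩⟩

lemma card_lowerNeighbors_last_le (G : SimpleGraph (Fin (n + 1))) :
    #(lowerNeighbors G (Fin.last n)) ≤ n :=
  card_lastNeighbors G ▸ (card_le_univ _).trans_eq (Fintype.card_fin n)

lemma isClique_of_forall_injOn {H : SimpleGraph (Fin n)} {s : Set (Fin n)} (h : n ≤ t)
    (hinj : ∀ c : ProperColoring H t, Set.InjOn c.1 s) : H.IsClique s := by
  intro i hi j hj hij
  by_contra hnadj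
  let c : ProperColoring H t := ⟨fun v => Fin.castLE h (if v = j then i else v), fun u v huv => by
    simp only [ne_eq, Fin.castLE_inj]
    split_ifs with hu hv hv <;> subst_vars
    · exact absurd huv (H.loopless.irrefl _)
    · exact fun hv => hnadj (hv ▸ huv.symm)
    · exact fun hu => hnadj (hu ▸ huv)
    · exact huv.ne⟩
  exact hij (hinj c hi hj (by simp [c, hij]))

theorem IsPEO.card_properColoring {G : SimpleGraph (Fin n)} (hG : IsPEO G) (t : ℕ) :
    (Nat.card (ProperColoring G t) : ℤ) = ∏ v, ((t : ℤ) - #(lowerNeighbors G v)) := by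
  induction n with
  | zero => rw [card_properColoring_zero]; simp
  | succ n ih =>
    obtain ⟨hG', hclique⟩ := (isPEO_succ_iff G).mp hG
    have hinj (c : ProperColoring (G.comap Fin.castSucc) t) :
        Set.InjOn c.1 (lastNeighbors G : Set (Fin n)) := fun u hu w hw h =>
      by_contra fun hne => c.2 u w (hclique hu hw hne) h
    rw [card_properColoring_succ, sum_eq_zero fun c _ => by rw [card_image_of_injOn (hinj c),
      sub_self], add_zero, ih hG', prod_sub_card_lowerNeighbors_succ]

theorem prod_le_card_properColoring {G : SimpleGraph (Fin n)} (h : n ≤ t) :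
    ∏ v, ((t : ℤ) - #(lowerNeighbors G v)) ≤ Nat.card (ProperColoring G t) := by
  induction n with
  | zero => rw [card_properColoring_zero]; simp
  | succ n ih =>
    have hlast : (0 : ℤ) ≤ t - #(lowerNeighbors G (Fin.last n)) := by
      have := card_lowerNeighbors_last_le G
      omega
    rw [card_properColoring_succ, prod_sub_card_lowerNeighbors_succ]
    refine le_add_of_le_of_nonneg (mul_le_mul_of_nonneg_right (ih (by omega)) hlast) ?_
    exact sum_nonneg fun c _ => sub_nonneg.mpr (by exact_mod_cast card_image_le)

theorem isPEO_of_card_properColoring_eq {G : SimpleGraph (Fin n)} (h : n ≤ t)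
    (heq : (Nat.card (ProperColoring G t) : ℤ) = ∏ v, ((t : ℤ) - #(lowerNeighbors G v))) :
    IsPEO G := by
  induction n with
  | zero => exact fun i => i.elim0
  | succ n ih =>
    have hlast : (0 : ℤ) < t - #(lowerNeighbors G (Fin.last n)) := by
      have := card_lowerNeighbors_last_le G
      omega
    have hdefect (c : ProperColoring (G.comap Fin.castSucc) t) :
        (0 : ℤ) ≤ #(lastNeighbors G) - #((lastNeighbors G).image c.1) :=
      sub_nonneg.mpr (by exact_mod_cast card_image_le)
    have hle := prod_le_card_properColoring (G := G.comap Fin.castSucc) (t := t) (by omega)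
    rw [card_properColoring_succ, prod_sub_card_lowerNeighbors_succ] at heq
    have hsum := sum_nonneg fun c (_ : c ∈ univ) => hdefect c
    have hcomap : (Nat.card (ProperColoring (G.comap Fin.castSucc) t) : ℤ) =
        ∏ v, ((t : ℤ) - #(lowerNeighbors (G.comap Fin.castSucc) v)) := by
      refine le_antisymm (le_of_mul_le_mul_right ?_ hlast) hle
      linarith
    have hzero := (sum_eq_zero_iff_of_nonneg fun c _ => hdefect c).mp (by
      rw [hcomap] at heq
      linarith)
    refine (isPEO_succ_iff G).mpr ⟨ih (by omega) hcomap,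
      isClique_of_forall_injOn (t := t) (by omega) fun c => card_image_iff.mp ?_⟩
    exact_mod_cast (sub_eq_zero.mp (hzero c (mem_univ c))).symm

end Coloring

theorem stmt_5 {n : ℕ} (G : SimpleGraph (Fin n)) :
    IsPEO G ↔
      ∀ t : ℕ, 0 < t →
        (Nat.card {c : Fin n → Fin t // ∀ u v, G.Adj u v → c u ≠ c v} : ℤ)
          = ∑ m ∈ Finset.range (n + 1), (-1) ^ m * (isf G m : ℤ) * (t : ℤ) ^ (n - m) := by
  simp only [sum_isf_eq_prod]
  refine ⟨fun hG t _ => hG.card_properColoring t, fun h => ?_⟩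
  exact isPEO_of_card_properColoring_eq (t := n + 1) n.le_succ (h (n + 1) n.succ_pos)
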